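/- Frame preservation: for any command C, if ((s,h), (s',h')) ∈ ⟦C⟧_ok and h_r is a heap disjoint from both h and h', then ((s, h ∘ h_r), (s', h' ∘ h_r)) ∈ ⟦C⟧_ok. -/
import Mathlib


/-- Variables -/
abbrev Var := String
/-- Locations -/
abbrev Loc := ℕ
/-- Values -/
abbrev Val := ℕ

/-- Terms: variables, the constant null, and numeric constants. -/
inductive Term where
  | var (x : Var)
  | null
  | const (n : ℕ)
deriving DecidableEq

/-- Stores: total functions from variables to values. -/
abbrev Store := Var → Val

/-- Heaps: partial functions from locations to values or ⊥.
`none` = not in domain, `some none` = ⊥ (deallocated), `some (some v)` = value `v`. -/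
abbrev Heap := Loc → Option (Option Val)

def Term.eval (s : Store) : Term → Val
  | .var x => s x
  | .null => 0
  | .const n => n

def Store.upd (s : Store) (x : Var) (v : Val) : Store :=
  fun y => if y = x then v else s y

def Heap.emptyH : Heap := fun _ => none

def Heap.dom (h : Heap) : Set Loc := {l | h l ≠ none}

def Heap.domPos (h : Heap) : Set Loc := {l | ∃ v : Val, h l = some (some v)}

def Heap.disj (h₁ h₂ : Heap) : Prop := Heap.dom h₁ ∩ Heap.dom h₂ = ∅

def Heap.comp (h₁ h₂ : Heap) : Heap :=
  fun l => match h₁ l with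
    | some v => some v
    | none => h₂ l

def Heap.upd (h : Heap) (l : Loc) (v : Option Val) : Heap :=
  fun l' => if l' = l then some v else h l'

def Heap.single (l : Loc) (v : Option Val) : Heap :=
  fun l' => if l' = l then some v else none

/-- Atomic formulas of quantifier-free symbolic heaps. -/
inductive Atom where
  | emp
  | pt (t u : Term)      -- t ↦ u
  | npt (t : Term)       -- t ↛  (negative heap assertion)
  | eq (t u : Term)      -- t ≈ u
  | neq (t u : Term)     -- t ≉ u
deriving DecidableEq

/-- Quantifier-free symbolic heap: a ∗-conjunction of atoms. -/
abbrev SymHeap := List Atom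

def Atom.sat (s : Store) (h : Heap) : Atom → Prop
  | .emp => h = Heap.emptyH
  | .pt t u => h = Heap.single (t.eval s) (some (u.eval s))
  | .npt t => h = Heap.single (t.eval s) none
  | .eq t u => t.eval s = u.eval s ∧ h = Heap.emptyH
  | .neq t u => t.eval s ≠ u.eval s ∧ h = Heap.emptyH

def SymHeap.sat (s : Store) (h : Heap) : SymHeap → Prop
  | [] => h = Heap.emptyH
  | a :: ψ => ∃ h₁ h₂, Heap.disj h₁ h₂ ∧ h = Heap.comp h₁ h₂ ∧
      Atom.sat s h₁ a ∧ SymHeap.sat s h₂ ψ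

def Term.subst (t : Term) (x : Var) (r : Term) : Term :=
  match t with
  | .var y => if y = x then r else .var y
  | t => t

def Atom.subst (a : Atom) (x : Var) (r : Term) : Atom :=
  match a with
  | .emp => .emp
  | .pt t u => .pt (t.subst x r) (u.subst x r)
  | .npt t => .npt (t.subst x r)
  | .eq t u => .eq (t.subst x r) (u.subst x r)
  | .neq t u => .neq (t.subst x r) (u.subst x r)

def SymHeap.subst (ψ : SymHeap) (x : Var) (r : Term) : SymHeap :=
  ψ.map (Atom.subst · x r)

def Term.fv : Term → Set Var
  | .var x => {x}
  | _ => ∅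

def Atom.fv : Atom → Set Var
  | .emp => ∅
  | .pt t u => t.fv ∪ u.fv
  | .npt t => t.fv
  | .eq t u => t.fv ∪ u.fv
  | .neq t u => t.fv ∪ u.fv

def SymHeap.fv (ψ : SymHeap) : Set Var := ⋃ a ∈ ψ, Atom.fv a

/-- Commands of the ISL programming language. -/
inductive Com where
  | skip
  | assign (x : Var) (t : Term)       -- x := t
  | havoc (x : Var)                   -- x := *
  | assm (B : SymHeap)                -- assume(B), B a pure formula
  | localv (x : Var) (C : Com)        -- local x in C
  | seq (C₁ C₂ : Com)
  | choice (C₁ C₂ : Com)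
  | star (C : Com)
  | alloc (x : Var)                   -- x := alloc()
  | free (x : Var)
  | load (x y : Var)                  -- x := [y]
  | store (x : Var) (t : Term)        -- [x] := t
  | error

/-- Exit conditions. -/
inductive ExitCond where
  | ok
  | er
deriving DecidableEq

abbrev State := Store × Heap
abbrev ISLRel := State → State → Prop

def relComp (R₁ R₂ : ISLRel) : ISLRel := fun a c => ∃ b, R₁ a b ∧ R₂ b c

def relIter (R : ISLRel) : ℕ → ISLRel
  | 0 => fun a b => a = b
  | n + 1 => relComp R (relIter R n)

/-- `s ⊨ B` for a pure formula `B`: satisfaction in the empty heap. -/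
def pureSat (s : Store) (B : SymHeap) : Prop := SymHeap.sat s Heap.emptyH B

/-- A pure formula: a ∗-conjunction of (in)equalities. -/
def isPure (B : SymHeap) : Prop :=
  ∀ a ∈ B, ∃ t u, a = Atom.eq t u ∨ a = Atom.neq t u

/-- Denotational semantics ⟦C⟧_ε of ISL commands. -/
def sem : Com → ExitCond → ISLRel
  | .skip, .ok => fun σ σ' => σ' = σ
  | .skip, .er => fun _ _ => False
  | .assign x t, .ok => fun σ σ' => σ' = (Store.upd σ.1 x (Term.eval σ.1 t), σ.2)
  | .assign _ _, .er => fun _ _ => False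
  | .havoc x, .ok => fun σ σ' => ∃ v : Val, σ' = (Store.upd σ.1 x v, σ.2)
  | .havoc _, .er => fun _ _ => False
  | .assm B, .ok => fun σ σ' => σ' = σ ∧ pureSat σ.1 B
  | .assm _, .er => fun _ _ => False
  | .localv x C, ε => fun σ σ' =>
      ∃ v v' : Val, sem C ε (Store.upd σ.1 x v, σ.2) (Store.upd σ'.1 x v', σ'.2) ∧
        σ.1 x = σ'.1 x
  | .seq C₁ C₂, .ok => relComp (sem C₁ .ok) (sem C₂ .ok)
  | .seq C₁ C₂, .er => fun σ σ' =>
      sem C₁ .er σ σ' ∨ relComp (sem C₁ .ok) (sem C₂ .er) σ σ'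
  | .choice C₁ C₂, ε => fun σ σ' => sem C₁ ε σ σ' ∨ sem C₂ ε σ σ'
  | .star C, .ok => fun σ σ' => ∃ n, relIter (sem C .ok) n σ σ'
  | .star C, .er => fun σ σ' => ∃ n, relComp (relIter (sem C .ok) n) (sem C .er) σ σ'
  | .alloc x, .ok => fun σ σ' =>
      ∃ (l : Loc) (v : Val), (σ.2 l = none ∨ σ.2 l = some none) ∧
        σ' = (Store.upd σ.1 x l, Heap.upd σ.2 l (some v))
  | .alloc _, .er => fun _ _ => False
  | .free x, .ok => fun σ σ' =>
      σ.1 x ∈ Heap.domPos σ.2 ∧ σ' = (σ.1, Heap.upd σ.2 (σ.1 x) none)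
  | .free x, .er => fun σ σ' => σ.1 x ∉ Heap.domPos σ.2 ∧ σ' = σ
  | .load x y, .ok => fun σ σ' =>
      ∃ v : Val, σ.2 (σ.1 y) = some (some v) ∧ σ' = (Store.upd σ.1 x v, σ.2)
  | .load _ y, .er => fun σ σ' => σ.1 y ∉ Heap.domPos σ.2 ∧ σ' = σ
  | .store x t, .ok => fun σ σ' =>
      σ.1 x ∈ Heap.domPos σ.2 ∧ σ' = (σ.1, Heap.upd σ.2 (σ.1 x) (some (Term.eval σ.1 t)))
  | .store x _, .er => fun σ σ' => σ.1 x ∉ Heap.domPos σ.2 ∧ σ' = σ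
  | .error, .ok => fun _ _ => False
  | .error, .er => fun σ σ' => σ' = σ

/-- Free variables of a command. -/
def Com.fv : Com → Set Var
  | .skip => ∅
  | .assign x t => {x} ∪ Term.fv t
  | .havoc x => {x}
  | .assm B => SymHeap.fv B
  | .localv x C => Com.fv C \ {x}
  | .seq C₁ C₂ => Com.fv C₁ ∪ Com.fv C₂
  | .choice C₁ C₂ => Com.fv C₁ ∪ Com.fv C₂
  | .star C => Com.fv C
  | .alloc x => {x}
  | .free x => {x}
  | .load x y => {x} ∪ {y}
  | .store x t => {x} ∪ Term.fv t
  | .error => ∅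

/-- Variables modified by a command. -/
def Com.mod : Com → Set Var
  | .skip => ∅
  | .assign x _ => {x}
  | .havoc x => {x}
  | .assm _ => ∅
  | .localv x C => Com.mod C \ {x}
  | .seq C₁ C₂ => Com.mod C₁ ∪ Com.mod C₂
  | .choice C₁ C₂ => Com.mod C₁ ∪ Com.mod C₂
  | .star C => Com.mod C
  | .alloc x => {x}
  | .free _ => ∅
  | .load x _ => {x}
  | .store _ _ => ∅
  | .error => ∅

/-- Semantic weakest postcondition. -/
def WPO (P : State → Prop) (C : Com) (ε : ExitCond) : Set State :=
  {σ' | ∃ σ, P σ ∧ sem C ε σ σ'}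

/-- Satisfaction of a symbolic heap as a predicate on states. -/
def satSH (ψ : SymHeap) : State → Prop := fun σ => SymHeap.sat σ.1 σ.2 ψ

/-- Satisfaction of an existentially quantified symbolic heap `∃ x⃗. ψ`. -/
def satEx (s : Store) (h : Heap) : List Var → SymHeap → Prop
  | [], ψ => SymHeap.sat s h ψ
  | x :: xs, ψ => ∃ v : Val, satEx (Store.upd s x v) h xs ψ

/-- Terms over a set of variables, together with null. -/
def termsOf (V : Set Var) : Set Term := {Term.null} ∪ (Term.var '' V)

/-- Canonical forms: symbolic heaps containing `t ≈ u` or `t ≉ u`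
for every pair of terms over `V ∪ {null}`. -/
def CFsh (V : Set Var) : Set SymHeap :=
  {ψ | ∀ t ∈ termsOf V, ∀ u ∈ termsOf V, Atom.eq t u ∈ ψ ∨ Atom.neq t u ∈ ψ}

/-- Complete case analyses `Π(V)`: pure formulas deciding every pair of terms
over `V ∪ {null}`, with the equality part reflexive and symmetric. -/
def PiCA (V : Set Var) : Set SymHeap :=
  {π | (∀ a ∈ π, ∃ t ∈ termsOf V, ∃ u ∈ termsOf V, a = Atom.eq t u ∨ a = Atom.neq t u)
    ∧ (∀ t ∈ termsOf V, ∀ u ∈ termsOf V,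
        (Atom.eq t u ∈ π ∧ Atom.neq t u ∉ π) ∨ (Atom.neq t u ∈ π ∧ Atom.eq t u ∉ π))
    ∧ (∀ t ∈ termsOf V, Atom.eq t t ∈ π)
    ∧ (∀ t u, Atom.eq t u ∈ π → Atom.eq u t ∈ π)}

def SymHeap.satisfiable (ψ : SymHeap) : Prop := ∃ s h, SymHeap.sat s h ψ

/-- Case analysis `CA(ψ, C)`. -/
def CA (ψ : SymHeap) (C : Com) : Set SymHeap :=
  {φ | ∃ π ∈ PiCA (SymHeap.fv ψ ∪ Com.fv C), φ = π ++ ψ ∧ SymHeap.satisfiable φ}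

/-- Validity of ISL triples: `⊨ [P] C [ε : Q]`. -/
def validTriple (P : State → Prop) (C : Com) (ε : ExitCond) (Q : State → Prop) : Prop :=
  ∀ σ', Q σ' → ∃ σ, P σ ∧ sem C ε σ σ'

lemma disj_iff (h₁ h₂ : Heap) :
    Heap.disj h₁ h₂ ↔ ∀ l, h₁ l = none ∨ h₂ l = none := by
  unfold Heap.disj Heap.dom
  constructor
  · intro hd l
    by_contra hc
    push_neg at hc
    have : l ∈ ({l | h₁ l ≠ none} ∩ {l | h₂ l ≠ none} : Set Loc) := ⟨hc.1, hc.2⟩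
    rw [hd] at this; exact this
  · intro hd
    ext l
    simp only [Set.mem_inter_iff, Set.mem_setOf_eq, Set.mem_empty_iff_false, iff_false]
    rintro ⟨h1, h2⟩
    rcases hd l with h | h
    · exact h1 h
    · exact h2 h

lemma dom_mono (C : Com) : ∀ σ σ' : State, sem C .ok σ σ' →
    Heap.dom σ.2 ⊆ Heap.dom σ'.2 := by
  induction C with
  | skip => rintro σ σ' h; simp [sem] at h; subst h; exact le_refl _
  | assign x t => rintro σ σ' h; simp [sem] at h; subst h; exact le_refl _
  | havoc x => rintro σ σ' h; obtain ⟨v, rfl⟩ := h; exact le_refl _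
  | assm B => rintro σ σ' ⟨rfl, _⟩; exact le_refl _
  | localv x C ih =>
      rintro σ σ' ⟨v, v', hs, _⟩
      exact ih (Store.upd σ.1 x v, σ.2) (Store.upd σ'.1 x v', σ'.2) hs
  | seq C₁ C₂ ih₁ ih₂ =>
      rintro σ σ' ⟨b, h1, h2⟩
      exact (ih₁ _ _ h1).trans (ih₂ _ _ h2)
  | choice C₁ C₂ ih₁ ih₂ =>
      rintro σ σ' h
      rcases h with h | h
      · exact ih₁ _ _ h
      · exact ih₂ _ _ h
  | star C ih =>
      rintro σ σ' ⟨n, h⟩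
      induction n generalizing σ with
      | zero => cases h; exact le_refl _
      | succ n ihn =>
          obtain ⟨b, h1, h2⟩ := h
          exact (ih _ _ h1).trans (ihn b h2)
  | alloc x =>
      rintro σ σ' ⟨l, v, hcond, rfl⟩
      intro l' hl'
      simp only [Heap.dom, Set.mem_setOf_eq, Heap.upd] at *
      by_cases he : l' = l <;> simp [he] at *; exact hl'
  | free x =>
      rintro σ σ' ⟨hmem, rfl⟩
      intro l' hl'
      simp only [Heap.dom, Set.mem_setOf_eq, Heap.upd] at *
      by_cases he : l' = σ.1 x <;> simp [he] at *; exact hl'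
  | load x y =>
      rintro σ σ' ⟨v, _, rfl⟩; exact le_refl _
  | store x t =>
      rintro σ σ' ⟨hmem, rfl⟩
      intro l' hl'
      simp only [Heap.dom, Set.mem_setOf_eq, Heap.upd] at *
      by_cases he : l' = σ.1 x <;> simp [he] at *; exact hl'
  | error => rintro σ σ' h; exact absurd h (by simp [sem])

lemma dom_mono_iter (C : Com) (n : ℕ) : ∀ σ σ' : State,
    relIter (sem C .ok) n σ σ' → Heap.dom σ.2 ⊆ Heap.dom σ'.2 := by
  induction n with
  | zero => rintro σ σ' h; cases h; exact le_refl _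
  | succ n ih =>
      rintro σ σ' ⟨b, h1, h2⟩
      exact (dom_mono C _ _ h1).trans (ih _ _ h2)

lemma frame_gen (C : Com) : ∀ (σ σ' : State) (hr : Heap),
    sem C .ok σ σ' → Heap.disj σ.2 hr → Heap.disj σ'.2 hr →
    sem C .ok (σ.1, Heap.comp σ.2 hr) (σ'.1, Heap.comp σ'.2 hr) := by
  induction C with
  | skip => rintro σ σ' hr h _ _; simp [sem] at h ⊢; subst h; exact ⟨rfl, rfl⟩
  | assign x t =>
      rintro σ σ' hr h _ _; subst h; rfl
  | havoc x =>
      rintro σ σ' hr ⟨v, h⟩ _ _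
      exact ⟨v, by rw [h]⟩
  | assm B =>
      rintro σ σ' hr ⟨rfl, hp⟩ _ _
      exact ⟨rfl, hp⟩
  | localv x C ih =>
      rintro σ σ' hr ⟨v, v', hs, hx⟩ hd hd'
      exact ⟨v, v', ih (Store.upd σ.1 x v, σ.2) (Store.upd σ'.1 x v', σ'.2) hr hs hd hd', hx⟩
  | seq C₁ C₂ ih₁ ih₂ =>
      rintro σ σ' hr ⟨b, h1, h2⟩ hd hd'
      have hdb : Heap.disj b.2 hr := by
        rw [disj_iff] at hd' ⊢
        intro l
        rcases hd' l with h | h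
        · by_cases hb : b.2 l = none
          · exact Or.inl hb
          · exact absurd (dom_mono C₂ _ _ h2 hb) (by simp [Heap.dom, h])
        · exact Or.inr h
      exact ⟨(b.1, Heap.comp b.2 hr), ih₁ _ _ _ h1 hd hdb, ih₂ _ _ _ h2 hdb hd'⟩
  | choice C₁ C₂ ih₁ ih₂ =>
      rintro σ σ' hr h hd hd'
      rcases h with h | h
      · exact Or.inl (ih₁ _ _ _ h hd hd')
      · exact Or.inr (ih₂ _ _ _ h hd hd')
  | star C ih =>
      rintro σ σ' hr ⟨n, h⟩ hd hd'
      refine ⟨n, ?_⟩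
      induction n generalizing σ with
      | zero => cases h; rfl
      | succ n ihn =>
          obtain ⟨b, h1, h2⟩ := h
          have hdb : Heap.disj b.2 hr := by
            rw [disj_iff] at hd' ⊢
            intro l
            rcases hd' l with hn | hn
            · by_cases hb : b.2 l = none
              · exact Or.inl hb
              · exact absurd (dom_mono_iter C n _ _ h2 hb) (by simp [Heap.dom, hn])
            · exact Or.inr hn
          exact ⟨(b.1, Heap.comp b.2 hr), ih _ _ _ h1 hd hdb, ihn b h2 hdb⟩
  | alloc x =>
      rintro σ σ' hr ⟨l, v, hcond, hq⟩ hd hd'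
      have hrl : hr l = none := by
        rw [disj_iff] at hd'
        rcases hd' l with hn | hn
        · rw [hq] at hn; simp [Heap.upd] at hn
        · exact hn
      refine ⟨l, v, ?_, ?_⟩
      · rcases hcond with hc | hc <;> simp [Heap.comp, hc, hrl]
      · rw [hq]
        refine Prod.ext rfl ?_
        funext l'
        by_cases he : l' = l <;> simp [Heap.comp, Heap.upd, he]
  | free x =>
      rintro σ σ' hr ⟨⟨v, hv⟩, hq⟩ hd hd'
      refine ⟨⟨v, by simp [Heap.comp, hv]⟩, ?_⟩
      rw [hq]
      refine Prod.ext rfl ?_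
      funext l'
      by_cases he : l' = σ.1 x <;> simp [Heap.comp, Heap.upd, he]
  | load x y =>
      rintro σ σ' hr ⟨v, hv, hq⟩ hd hd'
      refine ⟨v, by simp [Heap.comp, hv], by rw [hq]⟩
  | store x t =>
      rintro σ σ' hr ⟨⟨v, hv⟩, hq⟩ hd hd'
      refine ⟨⟨v, by simp [Heap.comp, hv]⟩, ?_⟩
      rw [hq]
      refine Prod.ext rfl ?_
      funext l'
      by_cases he : l' = σ.1 x <;> simp [Heap.comp, Heap.upd, he]
  | error => rintro σ σ' hr h; exact absurd h (by simp [sem])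

/-- frame preservation. -/
theorem frame_preservation (C : Com) (s s' : Store) (h h' hr : Heap)
    (hsem : sem C .ok (s, h) (s', h'))
    (hd : Heap.disj h hr) (hd' : Heap.disj h' hr) :
    sem C .ok (s, Heap.comp h hr) (s', Heap.comp h' hr) := by
  exact frame_gen C (s, h) (s', h') hr hsem hd hd'
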